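/- Entropy bound for the net 𝒫ⁿ_{k,ε} (Theorem 10.3): For all positive integers n and k and every real 0 < ε ≤ 1, ln(card 𝒫ⁿ_{k,ε}) ≤ (2k+1)ⁿ · ln(22·n·k); equivalently, card 𝒫ⁿ_{k,ε} ≤ (22·n·k)^{(2k+1)ⁿ}. -/

import Mathlib

/-! An element of `𝒫ⁿ_{k,ε}` is determined by its integer coefficients `m(x) = θ(x)/ε̂` at the
`N = (2k+1)ⁿ` grid points, and the mass bound gives `Σ |m(x)| ≤ 2nkN`. Encoding `ℤ ↪ ℕ` by
`m ↦ 2m` for `m ≥ 0` and `m ↦ 2|m| - 1` for `m < 0`, and adding one slack coordinate, turns the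
coefficient vector into a multiset of size `4nkN` on `N + 1` letters. Hence
`card 𝒫ⁿ_{k,ε} ≤ binom((4nk+1)N, N) ≤ (e(4nk+1))ᴺ ≤ (22nk)ᴺ`. -/

noncomputable section

/-- The grid `Σ_k = [-1,1]ⁿ ∩ (1/k)·ℤⁿ` of the cube of mesh `1/k`. -/
def grid (n k : ℕ) : Set (EuclideanSpace ℝ (Fin n)) :=
  {x | (∀ i, |x i| ≤ 1) ∧ ∀ i, ∃ m : ℤ, x i = m / k}

/-- Mass of a finitely supported function `θ : ℝⁿ → ℝ`, identified with the atomic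
signed measure `Σ_x θ(x)·δ_x`: `M(θ) = Σ_x |θ(x)|`. -/
def massF (n : ℕ) (θ : EuclideanSpace ℝ (Fin n) →₀ ℝ) : ℝ :=
  ∑ x ∈ θ.support, |θ x|

/-- Dual Lipschitz norm of a finitely supported function `θ : ℝⁿ → ℝ`:
`G(θ) = sup { Σ_x θ(x)·φ(x) : φ 1-Lipschitz }`. -/
def GF (n : ℕ) (θ : EuclideanSpace ℝ (Fin n) →₀ ℝ) : ℝ :=
  sSup {r : ℝ | ∃ φ : EuclideanSpace ℝ (Fin n) → ℝ,
    LipschitzWith 1 φ ∧ r = ∑ x ∈ θ.support, θ x * φ x}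

/-- The net `𝒫ⁿ_{k,ε}`: finitely supported functions carried by the grid `Σ_k`,
with values in `ε̂·ℤ` where `ε̂ = ε/(2n(2k+1)ⁿ)`, total sum `0`, and mass at most
`k·ε`. -/
def Pset (n k : ℕ) (ε : ℝ) : Set (EuclideanSpace ℝ (Fin n) →₀ ℝ) :=
  {θ | ↑θ.support ⊆ grid n k ∧
    (∀ x, ∃ m : ℤ, θ x = (ε / (2 * n * (2 * k + 1) ^ n)) * m) ∧
    ∑ x ∈ θ.support, θ x = 0 ∧
    ∑ x ∈ θ.support, |θ x| ≤ k * ε}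

theorem Equiv.intEquivNat_le (m : ℤ) : Equiv.intEquivNat m ≤ 2 * m.natAbs := by
  rcases m with m | m
  · exact le_rfl
  · change 2 * m + 1 ≤ 2 * (m + 1)
    omega

theorem eq_mul_round_div_of_eq_mul {c y : ℝ} (hc : c ≠ 0) {m : ℤ} (hy : y = c * m) :
    y = c * round (y / c) := by
  rw [hy, mul_div_cancel_left₀ _ hc, round_intCast]

section
variable {α : Type*} [Fintype α] [DecidableEq α]

def addSlack (B : ℕ) (f : {f : α → ℕ // ∑ i, f i ≤ B}) : Sym (Option α) B :=
  (Sym.equivNatSumOfFintype (Option α) B).symm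
    ⟨fun o => o.elim (B - ∑ i, f.1 i) f.1, by simp [Fintype.sum_option, f.2]⟩

theorem addSlack_injective (B : ℕ) : Function.Injective (addSlack (α := α) B) := by
  intro f g h
  have := congrFun (congrArg Subtype.val ((Sym.equivNatSumOfFintype _ B).symm.injective h))
  ext i
  simpa using this (some i)

instance (B : ℕ) : Finite {f : α → ℕ // ∑ i, f i ≤ B} :=
  .of_injective _ (addSlack_injective B)

theorem natCard_natVectors_sum_le (B : ℕ) :
    Nat.card {f : α → ℕ // ∑ i, f i ≤ B} ≤ (Fintype.card α + B).choose B := by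
  refine (Nat.card_le_card_of_injective _ (addSlack_injective B)).trans_eq ?_
  rw [Nat.card_eq_fintype_card, Sym.card_sym_eq_choose, Fintype.card_option, Nat.add_right_comm,
    Nat.add_sub_cancel]
end

section
variable {X : Type*} (G : Finset X) (c : ℝ) (B : ℕ)

def latticeFinsupps : Set (X →₀ ℝ) :=
  {θ | ↑θ.support ⊆ (G : Set X) ∧ (∀ x, ∃ m : ℤ, θ x = c * m) ∧ ∑ x ∈ θ.support, |θ x| ≤ c * B}

variable {G c B}

theorem sum_natAbs_round_le (hc : 0 < c) {θ : X →₀ ℝ} (hθ : θ ∈ latticeFinsupps G c B) :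
    ∑ x : G, (round (θ x / c)).natAbs ≤ B := by
  obtain ⟨hsupp, hval, hmass⟩ := hθ
  have habs (x : X) : |θ x| = c * (round (θ x / c)).natAbs := by
    obtain ⟨m, hm⟩ := hval x
    conv_lhs => rw [eq_mul_round_div_of_eq_mul hc.ne' hm]
    rw [abs_mul, abs_of_pos hc, Nat.cast_natAbs, Int.cast_abs]
  have hmass_G : ∑ x ∈ G, |θ x| ≤ c * B := by
    rwa [← Finset.sum_subset (Finset.coe_subset.1 hsupp)
      (fun x _ hx => by rw [Finsupp.notMem_support_iff.1 hx, abs_zero])]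
  rw [← Finset.sum_coe_sort G] at hmass_G
  simp only [habs, ← Finset.mul_sum] at hmass_G
  exact_mod_cast le_of_mul_le_mul_left hmass_G hc

variable (G c B) in
def latticeEncode (hc : 0 < c) (θ : latticeFinsupps G c B) : {f : G → ℕ // ∑ i, f i ≤ 2 * B} :=
  ⟨fun x => Equiv.intEquivNat (round (θ.1 x / c)), by
    grw [Finset.sum_le_sum fun x _ => Equiv.intEquivNat_le _, ← Finset.mul_sum,
      sum_natAbs_round_le hc θ.2]⟩

theorem latticeEncode_injective (hc : 0 < c) : Function.Injective (latticeEncode G c B hc) := by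
  intro θ η h
  have hround (x : G) : round (θ.1 x / c) = round (η.1 x / c) :=
    Equiv.intEquivNat.injective (congrFun (congrArg Subtype.val h) x)
  have hvalue (ζ : latticeFinsupps G c B) (x : X) : ζ.1 x = c * round (ζ.1 x / c) :=
    have ⟨_, hm⟩ := ζ.2.2.1 x
    eq_mul_round_div_of_eq_mul hc.ne' hm
  have hzero (ζ : latticeFinsupps G c B) (x : X) (hx : x ∉ G) : ζ.1 x = 0 :=
    Finsupp.notMem_support_iff.1 fun hx' => hx (ζ.2.1 hx')
  refine Subtype.ext (Finsupp.ext fun x => ?_)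
  by_cases hx : x ∈ G
  · rw [hvalue θ x, hvalue η x, hround ⟨x, hx⟩]
  · rw [hzero θ x hx, hzero η x hx]

theorem finite_latticeFinsupps (hc : 0 < c) : (latticeFinsupps G c B).Finite := by
  classical
  exact Set.finite_coe_iff.1 (.of_injective _ (latticeEncode_injective hc))

theorem natCard_latticeFinsupps_le (hc : 0 < c) :
    Nat.card (latticeFinsupps G c B) ≤ (G.card + 2 * B).choose (2 * B) := by
  classical
  calc Nat.card (latticeFinsupps G c B) ≤ Nat.card {f : G → ℕ // ∑ i, f i ≤ 2 * B} :=
        Nat.card_le_card_of_injective _ (latticeEncode_injective hc)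
    _ ≤ (G.card + 2 * B).choose (2 * B) := by
        simpa using natCard_natVectors_sum_le (α := G) (2 * B)

end

theorem Nat.choose_le_exp_one_mul_div_pow (m N : ℕ) :
    (m.choose N : ℝ) ≤ (Real.exp 1 * m / N) ^ N := by
  have hN : (0 : ℝ) < (N : ℝ) ^ N := by exact_mod_cast Nat.pow_self_pos
  have hfac : (N : ℝ) ^ N / N.factorial ≤ Real.exp 1 ^ N := by
    simpa [← Real.exp_nat_mul] using Real.pow_div_factorial_le_exp (N : ℝ) N.cast_nonneg N
  calc (m.choose N : ℝ) ≤ (m : ℝ) ^ N / N.factorial := Nat.choose_le_pow_div N m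
    _ = (m : ℝ) ^ N / N ^ N * ((N : ℝ) ^ N / N.factorial) := by field_simp
    _ ≤ (m : ℝ) ^ N / N ^ N * Real.exp 1 ^ N := by gcongr
    _ = (Real.exp 1 * m / N) ^ N := by rw [div_pow, mul_pow]; ring

theorem Real.log_natCast_le_mul_log_of_le_pow {a b N : ℕ} (hb : 1 ≤ b) (h : a ≤ b ^ N) :
    Real.log a ≤ N * Real.log b := by
  rcases Nat.eq_zero_or_pos a with rfl | ha
  · simpa using mul_nonneg N.cast_nonneg (Real.log_nonneg (by exact_mod_cast hb))
  · rw [← Real.log_pow]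
    exact Real.log_le_log (by exact_mod_cast ha) (by exact_mod_cast h)

def gridPoints (n k : ℕ) : Finset (EuclideanSpace ℝ (Fin n)) := by
  classical
  exact (Fintype.piFinset fun _ => Finset.Icc (-k : ℤ) k).image
    fun m => WithLp.toLp 2 fun i => (m i : ℝ) / k

theorem card_gridPoints_le (n k : ℕ) : (gridPoints n k).card ≤ (2 * k + 1) ^ n := by
  classical
  refine Finset.card_image_le.trans_eq ?_
  simp only [Fintype.card_piFinset, Int.card_Icc, Finset.prod_const, Finset.card_univ,
    Fintype.card_fin]
  congr 1
  omega

theorem grid_subset_gridPoints {n k : ℕ} (hk : 0 < k) : grid n k ⊆ gridPoints n k := by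
  classical
  rintro x ⟨hbound, hint⟩
  choose m hm using hint
  have hk' : (0 : ℝ) < k := by exact_mod_cast hk
  refine Finset.mem_image.2 ⟨m, Fintype.mem_piFinset.2 fun i => ?_, ?_⟩
  · have := hbound i
    rw [hm i, abs_div, abs_of_pos hk', div_le_one hk', ← Int.cast_abs, ← Int.cast_natCast,
      Int.cast_le] at this
    exact Finset.mem_Icc.2 (abs_le.1 this)
  · ext i
    exact (hm i).symm

theorem Pset_subset_latticeFinsupps {n k : ℕ} (hn : 0 < n) (hk : 0 < k) (ε : ℝ) :
    Pset n k ε ⊆ latticeFinsupps (gridPoints n k) (ε / (2 * n * (2 * k + 1) ^ n))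
      (2 * n * k * (2 * k + 1) ^ n) := by
  rintro θ ⟨hsupp, hval, -, hmass⟩
  refine ⟨hsupp.trans (grid_subset_gridPoints hk), hval, hmass.trans_eq ?_⟩
  have : (n : ℝ) ≠ 0 := by exact_mod_cast hn.ne'
  push_cast
  field_simp

theorem natCard_Pset_le {n k : ℕ} (hn : 0 < n) (hk : 0 < k) {ε : ℝ} (hε : 0 < ε) :
    Nat.card (Pset n k ε) ≤
      ((2 * k + 1) ^ n + 4 * n * k * (2 * k + 1) ^ n).choose ((2 * k + 1) ^ n) := by
  have hc : 0 < ε / (2 * n * (2 * k + 1) ^ n) := by positivity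
  calc Nat.card (Pset n k ε)
      ≤ Nat.card (latticeFinsupps (gridPoints n k) _ (2 * n * k * (2 * k + 1) ^ n)) :=
        Nat.card_mono (finite_latticeFinsupps hc) (Pset_subset_latticeFinsupps hn hk ε)
    _ ≤ _ := natCard_latticeFinsupps_le hc
    _ ≤ ((2 * k + 1) ^ n + 4 * n * k * (2 * k + 1) ^ n).choose (4 * n * k * (2 * k + 1) ^ n) := by
        rw [show 2 * (2 * n * k * (2 * k + 1) ^ n) = 4 * n * k * (2 * k + 1) ^ n by ring]
        exact Nat.choose_le_choose _ (Nat.add_le_add_right (card_gridPoints_le n k) _)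
    _ = _ := Nat.choose_symm_add.symm

theorem natCard_Pset_le_pow {n k : ℕ} (hn : 0 < n) (hk : 0 < k) {ε : ℝ} (hε : 0 < ε) :
    Nat.card (Pset n k ε) ≤ (22 * n * k) ^ ((2 * k + 1) ^ n) := by
  set N := (2 * k + 1) ^ n
  have hN0 : (N : ℝ) ≠ 0 := by positivity
  have hnk : (1 : ℝ) ≤ n * k := one_le_mul_of_one_le_of_one_le (by exact_mod_cast hn)
    (by exact_mod_cast hk)
  have hchoose : ((N + 4 * n * k * N).choose N : ℝ) ≤ ((22 * n * k : ℕ) : ℝ) ^ N :=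
    calc ((N + 4 * n * k * N).choose N : ℝ) ≤ (Real.exp 1 * (N + 4 * n * k * N : ℕ) / N) ^ N :=
          Nat.choose_le_exp_one_mul_div_pow _ _
      _ = (Real.exp 1 * (1 + 4 * n * k)) ^ N := by push_cast; field_simp
      _ ≤ ((22 * n * k : ℕ) : ℝ) ^ N := by
          gcongr
          push_cast
          nlinarith [Real.exp_one_lt_d9, Real.exp_pos 1]
  exact (natCard_Pset_le hn hk hε).trans (by exact_mod_cast hchoose)

theorem stmt18_general (n k : ℕ) (hn : 0 < n) (hk : 0 < k)
    (ε : ℝ) (hε0 : 0 < ε) :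
    Real.log (Nat.card ↥(Pset n k ε)) ≤
        ((2 * k + 1) ^ n : ℝ) * Real.log (22 * n * k) ∧
      Nat.card ↥(Pset n k ε) ≤ (22 * n * k) ^ ((2 * k + 1) ^ n) := by
  have hcard := natCard_Pset_le_pow hn hk hε0
  refine ⟨?_, hcard⟩
  have hbase : 1 ≤ 22 * n * k := by nlinarith
  simpa using Real.log_natCast_le_mul_log_of_le_pow hbase hcard

/-- Entropy bound for the net `𝒫ⁿ_{k,ε}` (Theorem 10.3):
`ln(card 𝒫ⁿ_{k,ε}) ≤ (2k+1)ⁿ · ln(22nk)`; equivalently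
`card 𝒫ⁿ_{k,ε} ≤ (22nk)^{(2k+1)ⁿ}`. -/
theorem stmt18 (n k : ℕ) (hn : 0 < n) (hk : 0 < k)
    (ε : ℝ) (hε0 : 0 < ε) (hε1 : ε ≤ 1) :
    Real.log (Nat.card ↥(Pset n k ε)) ≤
        ((2 * k + 1) ^ n : ℝ) * Real.log (22 * n * k) ∧
      Nat.card ↥(Pset n k ε) ≤ (22 * n * k) ^ ((2 * k + 1) ^ n) :=
  stmt18_general n k hn hk ε hε0
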